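/- arXiv:2010.15017 — 2 statements merged into one kernel-verified Lean document; each statement's English description precedes it below -/
import Mathlib

section
/- For the north pole k = (0,0,1) of the unit sphere S² in ℝ³, the surface integral over S² of 1/|s − k| with respect to surface measure equals 4π. -/
open MeasureTheory Metric Set Real
open scoped Pointwise ENNReal

noncomputable section SphereIntegralProof

local notation "E3" => EuclideanSpace ℝ (Fin 3)

private def Jc (a z : ℝ) : ℝ :=
  if z < 0 then (if a < 0 then min (1 - z^2) (z^2*(1-a^2)/a^2) else 1 - z^2)
  else (if 0 < a then (1 - z^2) - z^2*(1-a^2)/a^2 else 0)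

private lemma measJc (a : ℝ) : Measurable fun z => Jc a z := by
  unfold Jc
  refine Measurable.ite (measurableSet_lt measurable_id measurable_const) ?_ ?_ <;>
    split_ifs <;> fun_prop


private lemma ofReal_max0 (x : ℝ) : ENNReal.ofReal (max 0 x) = ENNReal.ofReal x := by
  rcases le_total x 0 with h | h
  · rw [max_eq_left h, ENNReal.ofReal_zero, eq_comm, ENNReal.ofReal_eq_zero.2 h]
  · rw [max_eq_right h]

private lemma measQ2 : Measurable fun y : Fin 2 → ℝ => ∑ j, y j ^ 2 := by fun_prop

private lemma vol2_lt (A : ℝ) :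
    volume {y : Fin 2 → ℝ | (∑ j, y j ^ 2) < A} = ENNReal.ofReal (π * A) := by
  rcases le_or_gt A 0 with hA | hA
  · have : {y : Fin 2 → ℝ | (∑ j, y j ^ 2) < A} = ∅ := by
      ext y
      simp only [mem_setOf_eq, mem_empty_iff_false, iff_false, not_lt]
      exact hA.trans (Finset.sum_nonneg fun j _ => sq_nonneg _)
    rw [this, measure_empty, eq_comm, ENNReal.ofReal_eq_zero]
    exact mul_nonpos_of_nonneg_of_nonpos pi_pos.le hA
  · have h1 : (MeasurableEquiv.toLp 2 (Fin 2 → ℝ)).symm ⁻¹' {y : Fin 2 → ℝ | (∑ j, y j ^ 2) < A}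
        = ball (0 : EuclideanSpace ℝ (Fin 2)) (Real.sqrt A) := by
      ext w
      simp only [mem_preimage, mem_setOf_eq, mem_ball, dist_zero_right]
      have hw : ∀ j, (MeasurableEquiv.toLp 2 (Fin 2 → ℝ)).symm w j = w j := fun j => rfl
      simp only [hw]
      rw [EuclideanSpace.norm_eq]
      simp only [Real.norm_eq_abs, sq_abs]
      rw [Real.sqrt_lt_sqrt_iff (Finset.sum_nonneg fun j _ => sq_nonneg _)]
    rw [← (EuclideanSpace.volume_preserving_symm_measurableEquiv_toLp (Fin 2)).measure_preimage
        ((measurableSet_lt measQ2 measurable_const).nullMeasurableSet), h1,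
      EuclideanSpace.volume_ball]
    have hcard : (Fintype.card (Fin 2)) = 2 := by simp
    rw [hcard, show ((2:ℕ) : ℝ) / 2 + 1 = 2 by norm_num, Real.Gamma_two,
      ← ENNReal.ofReal_pow (Real.sqrt_nonneg _), ← ENNReal.ofReal_mul (by positivity)]
    congr 1
    rw [Real.sq_sqrt hA.le, Real.sq_sqrt pi_pos.le]
    ring

private lemma vol2_le (A : ℝ) :
    volume {y : Fin 2 → ℝ | (∑ j, y j ^ 2) ≤ A} = ENNReal.ofReal (π * A) := by
  rcases lt_or_ge A 0 with hA | hA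
  · have : {y : Fin 2 → ℝ | (∑ j, y j ^ 2) ≤ A} = ∅ := by
      ext y
      simp only [mem_setOf_eq, mem_empty_iff_false, iff_false, not_le]
      exact hA.trans_le (Finset.sum_nonneg fun j _ => sq_nonneg _)
    rw [this, measure_empty, eq_comm, ENNReal.ofReal_eq_zero]
    exact mul_nonpos_of_nonneg_of_nonpos pi_pos.le hA.le
  · have h1 : (MeasurableEquiv.toLp 2 (Fin 2 → ℝ)).symm ⁻¹' {y : Fin 2 → ℝ | (∑ j, y j ^ 2) ≤ A}
        = closedBall (0 : EuclideanSpace ℝ (Fin 2)) (Real.sqrt A) := by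
      ext w
      simp only [mem_preimage, mem_setOf_eq, mem_closedBall, dist_zero_right]
      have hw : ∀ j, (MeasurableEquiv.toLp 2 (Fin 2 → ℝ)).symm w j = w j := fun j => rfl
      simp only [hw]
      rw [EuclideanSpace.norm_eq]
      simp only [Real.norm_eq_abs, sq_abs]
      rw [Real.sqrt_le_sqrt_iff hA]
    rw [← (EuclideanSpace.volume_preserving_symm_measurableEquiv_toLp (Fin 2)).measure_preimage
        ((measurableSet_le measQ2 measurable_const).nullMeasurableSet), h1,
      EuclideanSpace.volume_closedBall]
    have hcard : (Fintype.card (Fin 2)) = 2 := by simp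
    rw [hcard, show ((2:ℕ) : ℝ) / 2 + 1 = 2 by norm_num, Real.Gamma_two,
      ← ENNReal.ofReal_pow (Real.sqrt_nonneg _), ← ENNReal.ofReal_mul (by positivity)]
    congr 1
    rw [Real.sq_sqrt hA, Real.sq_sqrt pi_pos.le]
    ring

private lemma vol2_annulus (A B : ℝ) (hB : 0 ≤ B) :
    volume {y : Fin 2 → ℝ | B ≤ (∑ j, y j ^ 2) ∧ (∑ j, y j ^ 2) < A}
      = ENNReal.ofReal (π * (A - B)) := by
  rcases le_or_gt A B with hAB | hAB
  · have : {y : Fin 2 → ℝ | B ≤ (∑ j, y j ^ 2) ∧ (∑ j, y j ^ 2) < A} = ∅ := by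
      ext y
      simp only [mem_setOf_eq, mem_empty_iff_false, iff_false, not_and, not_lt]
      exact fun h => hAB.trans h
    rw [this, measure_empty, eq_comm, ENNReal.ofReal_eq_zero]
    exact mul_nonpos_of_nonneg_of_nonpos pi_pos.le (by linarith)
  · have hset : {y : Fin 2 → ℝ | B ≤ (∑ j, y j ^ 2) ∧ (∑ j, y j ^ 2) < A}
        = {y : Fin 2 → ℝ | (∑ j, y j ^ 2) < A} \ {y : Fin 2 → ℝ | (∑ j, y j ^ 2) < B} := by
      ext y; simp only [mem_setOf_eq, mem_diff, not_lt]; tauto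
    have hsub : {y : Fin 2 → ℝ | (∑ j, y j ^ 2) < B} ⊆ {y : Fin 2 → ℝ | (∑ j, y j ^ 2) < A} :=
      fun y hy => lt_of_lt_of_le hy hAB.le
    have hfin : volume {y : Fin 2 → ℝ | (∑ j, y j ^ 2) < B} ≠ ⊤ := by
      rw [vol2_lt]; exact ENNReal.ofReal_ne_top
    rw [hset, measure_diff hsub
        ((measurableSet_lt measQ2 measurable_const).nullMeasurableSet) hfin,
      vol2_lt, vol2_lt, ← ENNReal.ofReal_sub _ (by positivity)]
    congr 1; ring

private lemma vol2_min (A B : ℝ) :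
    volume {y : Fin 2 → ℝ | (∑ j, y j ^ 2) < A ∧ (∑ j, y j ^ 2) ≤ B}
      = ENNReal.ofReal (π * min A B) := by
  rcases le_or_gt A B with hAB | hAB
  · have : {y : Fin 2 → ℝ | (∑ j, y j ^ 2) < A ∧ (∑ j, y j ^ 2) ≤ B}
        = {y : Fin 2 → ℝ | (∑ j, y j ^ 2) < A} := by
      ext y; simp only [mem_setOf_eq, and_iff_left_iff_imp]
      exact fun h => h.le.trans hAB
    rw [this, vol2_lt, min_eq_left hAB]
  · have : {y : Fin 2 → ℝ | (∑ j, y j ^ 2) < A ∧ (∑ j, y j ^ 2) ≤ B}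
        = {y : Fin 2 → ℝ | (∑ j, y j ^ 2) ≤ B} := by
      ext y; simp only [mem_setOf_eq, and_iff_right_iff_imp]
      exact fun h => lt_of_le_of_lt h hAB
    rw [this, vol2_le, min_eq_right hAB.le]

private lemma slice_vol (a : ℝ) (ha : a < 1) {z : ℝ} (hz : z ≠ 0) :
    volume {y : Fin 2 → ℝ |
        (Real.sqrt (z^2 + ∑ j, y j ^ 2) ∈ Ioo 0 1) ∧ z ≤ a * Real.sqrt (z^2 + ∑ j, y j ^ 2)}
      = ENNReal.ofReal (π * Jc a z) := by
  have hq : ∀ y : Fin 2 → ℝ, (0:ℝ) ≤ ∑ j, y j ^ 2 := fun y =>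
    Finset.sum_nonneg fun j _ => sq_nonneg _
  have hpos : ∀ y : Fin 2 → ℝ, 0 < z^2 + ∑ j, y j ^ 2 := fun y => by
    have := hq y; positivity
  have hrpos : ∀ y : Fin 2 → ℝ, 0 < Real.sqrt (z^2 + ∑ j, y j ^ 2) := fun y =>
    Real.sqrt_pos.2 (hpos y)
  have hsq : ∀ y : Fin 2 → ℝ, Real.sqrt (z^2 + ∑ j, y j ^ 2) ^ 2 = z^2 + ∑ j, y j ^ 2 :=
    fun y => Real.sq_sqrt (hpos y).le
  -- first condition
  have hc1 : ∀ y : Fin 2 → ℝ,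
      (Real.sqrt (z^2 + ∑ j, y j ^ 2) ∈ Ioo 0 1) ↔ (∑ j, y j ^ 2) < 1 - z^2 := by
    intro y
    constructor
    · rintro ⟨-, h2⟩
      have : z^2 + ∑ j, y j ^ 2 < 1 := by
        have := Real.sqrt_lt_sqrt_iff (hpos y).le (y := 1)
        rw [Real.sqrt_one] at this
        exact this.1 h2
      linarith
    · intro h
      refine ⟨hrpos y, ?_⟩
      rw [show (1:ℝ) = Real.sqrt 1 by rw [Real.sqrt_one],
        Real.sqrt_lt_sqrt_iff (hpos y).le]
      linarith
  rcases lt_or_ge z 0 with hzneg | hzpos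
  · rcases lt_or_ge a 0 with haneg | hanneg
    · -- z < 0, a < 0 : capped disk
      have hc2 : ∀ y : Fin 2 → ℝ,
          (z ≤ a * Real.sqrt (z^2 + ∑ j, y j ^ 2)) ↔
            (∑ j, y j ^ 2) ≤ z^2*(1-a^2)/a^2 := by
        intro y
        set r := Real.sqrt (z^2 + ∑ j, y j ^ 2) with hr
        have hr0 : 0 < r := hrpos y
        have ha0 : a ≠ 0 := ne_of_lt haneg
        have ha2 : (0:ℝ) < a^2 := lt_of_le_of_ne (sq_nonneg a) (Ne.symm (pow_ne_zero 2 ha0))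
        rw [show (z ≤ a * r) ↔ (-(a*r) ≤ -z) by constructor <;> intro h <;> linarith]
        rw [show (-(a*r)) = (-a)*r by ring]
        have hl : (-a)*r ≤ -z ↔ ((-a)*r)^2 ≤ (-z)^2 := by
          constructor
          · intro h; exact pow_le_pow_left₀ (mul_nonneg (by linarith) hr0.le) h 2
          · intro h
            have h1 : (0:ℝ) ≤ (-a)*r := mul_nonneg (by linarith) hr0.le
            have h2 : (0:ℝ) ≤ -z := by linarith
            nlinarith
        rw [hl]
        rw [show ((-a)*r)^2 = a^2 * r^2 by ring, hsq y, le_div_iff₀ ha2]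
        constructor <;> intro h <;> nlinarith
      have : {y : Fin 2 → ℝ |
          (Real.sqrt (z^2 + ∑ j, y j ^ 2) ∈ Ioo 0 1) ∧
            z ≤ a * Real.sqrt (z^2 + ∑ j, y j ^ 2)}
          = {y : Fin 2 → ℝ | (∑ j, y j ^ 2) < 1 - z^2 ∧ (∑ j, y j ^ 2) ≤ z^2*(1-a^2)/a^2} := by
        ext y; rw [mem_setOf_eq, mem_setOf_eq, hc1 y, hc2 y]
      rw [this, vol2_min]
      unfold Jc
      rw [if_pos hzneg, if_pos haneg]
    · -- z < 0, 0 ≤ a : full disk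
      have : {y : Fin 2 → ℝ |
          (Real.sqrt (z^2 + ∑ j, y j ^ 2) ∈ Ioo 0 1) ∧
            z ≤ a * Real.sqrt (z^2 + ∑ j, y j ^ 2)}
          = {y : Fin 2 → ℝ | (∑ j, y j ^ 2) < 1 - z^2} := by
        ext y
        rw [mem_setOf_eq, mem_setOf_eq, hc1 y, and_iff_left_iff_imp]
        intro _
        have : (0:ℝ) ≤ a * Real.sqrt (z^2 + ∑ j, y j ^ 2) := by positivity
        linarith
      rw [this, vol2_lt]
      unfold Jc
      rw [if_pos hzneg, if_neg (not_lt.2 hanneg)]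
  · -- 0 ≤ z, z ≠ 0 so 0 < z
    have hz0 : 0 < z := lt_of_le_of_ne hzpos (Ne.symm hz)
    rcases le_or_gt a 0 with hale | hagt
    · -- empty
      have : {y : Fin 2 → ℝ |
          (Real.sqrt (z^2 + ∑ j, y j ^ 2) ∈ Ioo 0 1) ∧
            z ≤ a * Real.sqrt (z^2 + ∑ j, y j ^ 2)}
          = ∅ := by
        ext y
        simp only [mem_setOf_eq, mem_empty_iff_false, iff_false, not_and]
        intro _
        have : a * Real.sqrt (z^2 + ∑ j, y j ^ 2) ≤ 0 :=
          mul_nonpos_of_nonpos_of_nonneg hale (Real.sqrt_nonneg _)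
        intro h; linarith
      rw [this, measure_empty]
      unfold Jc
      rw [if_neg (not_lt.2 hzpos), if_neg (not_lt.2 hale), mul_zero, ENNReal.ofReal_zero]
    · -- annulus
      have ha0 : a ≠ 0 := ne_of_gt hagt
      have ha2 : (0:ℝ) < a^2 := lt_of_le_of_ne (sq_nonneg a) (Ne.symm (pow_ne_zero 2 ha0))
      have hB : (0:ℝ) ≤ z^2*(1-a^2)/a^2 := by
        apply div_nonneg _ ha2.le
        have : (0:ℝ) ≤ 1 - a^2 := by nlinarith
        positivity
      have hc2 : ∀ y : Fin 2 → ℝ,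
          (z ≤ a * Real.sqrt (z^2 + ∑ j, y j ^ 2)) ↔
            z^2*(1-a^2)/a^2 ≤ (∑ j, y j ^ 2) := by
        intro y
        set r := Real.sqrt (z^2 + ∑ j, y j ^ 2) with hr
        have hr0 : 0 < r := hrpos y
        have hl : z ≤ a*r ↔ z^2 ≤ (a*r)^2 := by
          constructor
          · intro h; exact pow_le_pow_left₀ hz0.le h 2
          · intro h
            have h1 : (0:ℝ) ≤ a*r := mul_nonneg hagt.le hr0.le
            nlinarith
        rw [hl, show (a*r)^2 = a^2 * r^2 by ring, hsq y, div_le_iff₀ ha2]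
        constructor <;> intro h <;> nlinarith
      have : {y : Fin 2 → ℝ |
          (Real.sqrt (z^2 + ∑ j, y j ^ 2) ∈ Ioo 0 1) ∧
            z ≤ a * Real.sqrt (z^2 + ∑ j, y j ^ 2)}
          = {y : Fin 2 → ℝ | z^2*(1-a^2)/a^2 ≤ (∑ j, y j ^ 2) ∧ (∑ j, y j ^ 2) < 1 - z^2} := by
        ext y
        rw [mem_setOf_eq, mem_setOf_eq, hc1 y, hc2 y, and_comm]
      rw [this, vol2_annulus _ _ hB]
      unfold Jc
      rw [if_neg (not_lt.2 hzpos), if_pos hagt]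

private lemma measW (a : ℝ) : MeasurableSet {x : Fin 3 → ℝ |
    (Real.sqrt (∑ i, x i ^ 2) ∈ Ioo 0 1) ∧ x 2 ≤ a * Real.sqrt (∑ i, x i ^ 2)} := by
  have hf : Measurable fun x : Fin 3 → ℝ => Real.sqrt (∑ i, x i ^ 2) :=
    Real.continuous_sqrt.measurable.comp (by fun_prop)
  exact (hf measurableSet_Ioo).inter
    (measurableSet_le (measurable_pi_apply 2) (hf.const_mul a))

private lemma volW_eq_lintegral (a : ℝ) (ha : a < 1) :
    volume {x : Fin 3 → ℝ |
        (Real.sqrt (∑ i, x i ^ 2) ∈ Ioo 0 1) ∧ x 2 ≤ a * Real.sqrt (∑ i, x i ^ 2)}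
      = ∫⁻ z : ℝ, ENNReal.ofReal (π * Jc a z) := by
  set e := MeasurableEquiv.piFinSuccAbove (fun _ : Fin 3 => ℝ) 2 with he
  have hmp : MeasurePreserving e volume
      ((volume : Measure ℝ).prod (volume : Measure (Fin 2 → ℝ))) := by
    have h := measurePreserving_piFinSuccAbove (fun _ : Fin 3 => (volume : Measure ℝ)) 2
    rw [show (volume : Measure (Fin 3 → ℝ)) = Measure.pi fun _ => volume from volume_pi,
      show (volume : Measure (Fin 2 → ℝ)) = Measure.pi fun _ => volume from volume_pi]
    exact h
  set V : Set (ℝ × (Fin 2 → ℝ)) := {p | (Real.sqrt (p.1^2 + ∑ j, p.2 j ^ 2) ∈ Ioo 0 1) ∧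
      p.1 ≤ a * Real.sqrt (p.1^2 + ∑ j, p.2 j ^ 2)} with hV
  have hVmeas : MeasurableSet V := by
    have hf : Measurable fun p : ℝ × (Fin 2 → ℝ) => Real.sqrt (p.1^2 + ∑ j, p.2 j ^ 2) :=
      Real.continuous_sqrt.measurable.comp (by fun_prop)
    exact (hf measurableSet_Ioo).inter (measurableSet_le measurable_fst (hf.const_mul a))
  have hWV : {x : Fin 3 → ℝ |
        (Real.sqrt (∑ i, x i ^ 2) ∈ Ioo 0 1) ∧ x 2 ≤ a * Real.sqrt (∑ i, x i ^ 2)}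
      = e ⁻¹' V := by
    ext x
    have hsum : ∑ i, x i ^ 2 = x 2 ^ 2 + ∑ j, x ((2:Fin 3).succAbove j) ^ 2 :=
      Fin.sum_univ_succAbove (fun i => x i ^ 2) 2
    simp only [mem_preimage, hV, mem_setOf_eq, he,
      MeasurableEquiv.piFinSuccAbove_apply, Fin.insertNthEquiv, Equiv.coe_fn_symm_mk, Fin.removeNth]
    rw [← hsum]
  rw [hWV, hmp.measure_preimage hVmeas.nullMeasurableSet, Measure.prod_apply hVmeas]
  refine lintegral_congr_ae ?_
  have h0 : ∀ᵐ z : ℝ, z ≠ 0 := by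
    rw [ae_iff]
    simp only [ne_eq, not_not, setOf_eq_eq_singleton]; exact measure_singleton (0:ℝ)
  filter_upwards [h0] with z hz
  have : (Prod.mk z ⁻¹' V) = {y : Fin 2 → ℝ |
      (Real.sqrt (z^2 + ∑ j, y j ^ 2) ∈ Ioo 0 1) ∧ z ≤ a * Real.sqrt (z^2 + ∑ j, y j ^ 2)} := rfl
  rw [this, slice_vol a ha hz]

private lemma int_one_sub_sq (u v : ℝ) :
    ∫ z in u..v, (π - π * z^2) = π*(v - u) - π*(v^3-u^3)/3 := by
  rw [intervalIntegral.integral_sub intervalIntegrable_const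
      ((intervalIntegral.intervalIntegrable_pow 2).const_mul π),
    intervalIntegral.integral_const_mul, integral_pow,
    intervalIntegral.integral_const, smul_eq_mul]
  norm_num
  ring

private lemma int_const_mul_sq (c u v : ℝ) :
    ∫ z in u..v, c * z^2 = c*(v^3-u^3)/3 := by
  rw [intervalIntegral.integral_const_mul, integral_pow]
  norm_num
  ring

private lemma lint_J (a : ℝ) (ha : a < 1) :
    ∫⁻ z : ℝ, ENNReal.ofReal (π * Jc a z)
      = ENNReal.ofReal (2*π/3*(1 + max (-1) a)) := by
  set f : ℝ → ℝ := fun z => max 0 (π * Jc a z) with hf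
  have hfm : Measurable f := measurable_const.max ((measJc a).const_mul π)
  -- f vanishes outside Ioc (-1) 1
  have hvanish : ∀ z : ℝ, z ∉ Ioc (-1:ℝ) 1 → f z = 0 := by
    intro z hz
    rw [mem_Ioc, not_and_or, not_lt, not_le] at hz
    have hJ : Jc a z ≤ 0 := by
      unfold Jc
      rcases hz with hz | hz
      · -- z ≤ -1
        have hzneg : z < 0 := by linarith
        rw [if_pos hzneg]
        split_ifs with h
        · exact (min_le_left _ _).trans (by nlinarith)
        · nlinarith
      · -- 1 < z
        rw [if_neg (by push_neg; linarith)]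
        split_ifs with h
        · have h2 : (0:ℝ) ≤ z^2*(1-a^2)/a^2 := by
            apply div_nonneg _ (sq_nonneg a)
            have : (0:ℝ) ≤ 1 - a^2 := by nlinarith
            positivity
          nlinarith
        · exact le_refl 0
    exact max_eq_left (mul_nonpos_of_nonneg_of_nonpos pi_pos.le hJ)
  -- f is bounded by π on Icc
  have hub : ∀ z, f z ≤ indicator (Icc (-1:ℝ) 1) (fun _ => π) z := by
    intro z
    by_cases hz : z ∈ Icc (-1:ℝ) 1
    · rw [indicator_of_mem hz]
      rcases hz with ⟨hz1, hz2⟩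
      refine max_le pi_pos.le ?_
      have hJ : Jc a z ≤ 1 := by
        unfold Jc
        split_ifs with h1 h2 h3
        · exact (min_le_left _ _).trans (by nlinarith)
        · nlinarith
        · have h2 : (0:ℝ) ≤ z^2*(1-a^2)/a^2 := by
            apply div_nonneg _ (sq_nonneg a)
            have : (0:ℝ) ≤ 1 - a^2 := by nlinarith
            positivity
          nlinarith
        · norm_num
      nlinarith [pi_pos]
    · rw [indicator_of_notMem hz, hvanish z (fun hmem => hz ⟨hmem.1.le, hmem.2⟩)]
  have hint : Integrable f := by
    have hgint : Integrable ((Icc (-1:ℝ) 1).indicator (fun _ => π)) :=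
      (integrable_indicator_iff measurableSet_Icc).2
        (integrableOn_const measure_Icc_lt_top.ne)
    refine hgint.mono' hfm.aestronglyMeasurable
      (Filter.Eventually.of_forall fun z => ?_)
    rw [Real.norm_eq_abs, abs_of_nonneg (le_max_left _ _)]
    exact hub z
  have step1 : ∫⁻ z : ℝ, ENNReal.ofReal (π * Jc a z) = ENNReal.ofReal (∫ z, f z) := by
    rw [ofReal_integral_eq_lintegral_ofReal hint
      (Filter.Eventually.of_forall fun z => le_max_left _ _)]
    exact lintegral_congr fun z => (ofReal_max0 _).symm
  rw [step1]
  congr 1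
  -- restrict to the interval
  have hindic : f = (Ioc (-1:ℝ) 1).indicator f := by
    funext z
    by_cases hz : z ∈ Ioc (-1:ℝ) 1
    · rw [indicator_of_mem hz]
    · rw [indicator_of_notMem hz, hvanish z hz]
  have hIoc : ∫ z, f z = ∫ z in (-1:ℝ)..1, f z := by
    rw [intervalIntegral.integral_of_le (by norm_num : (-1:ℝ) ≤ 1)]
    conv_lhs => rw [hindic]
    exact integral_indicator measurableSet_Ioc
  rw [hIoc]
  rcases le_or_gt a (-1) with h1 | h1
  · -- a ≤ -1 : integrand vanishes
    have hEq : EqOn f (fun _ => (0:ℝ)) (uIcc (-1:ℝ) 1) := by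
      intro z _
      show max 0 (π * Jc a z) = 0
      have hJ : Jc a z ≤ 0 := by
        unfold Jc
        split_ifs with hzlt hneg hpos
        · refine (min_le_right _ _).trans ?_
          apply div_nonpos_of_nonpos_of_nonneg _ (sq_nonneg a)
          exact mul_nonpos_of_nonneg_of_nonpos (sq_nonneg z) (by nlinarith)
        · exact absurd (by linarith : a < 0) hneg
        · linarith
        · exact le_refl 0
      exact max_eq_left (mul_nonpos_of_nonneg_of_nonpos pi_pos.le hJ)
    rw [intervalIntegral.integral_congr hEq, intervalIntegral.integral_zero,
      max_eq_left h1]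
    norm_num
  · have hII : ∀ u v : ℝ, IntervalIntegrable f volume u v := fun u v =>
      hint.intervalIntegrable
    rcases lt_or_ge a 0 with h2 | h2
    · -- -1 < a < 0
      have ha0 : a ≠ 0 := ne_of_lt h2
      have ha2 : (0:ℝ) < a^2 := lt_of_le_of_ne (sq_nonneg a) (Ne.symm (pow_ne_zero 2 ha0))
      have hsplit : ∫ z in (-1:ℝ)..1, f z
          = ((∫ z in (-1:ℝ)..a, f z) + ∫ z in a..(0:ℝ), f z) + ∫ z in (0:ℝ)..1, f z := by
        rw [intervalIntegral.integral_add_adjacent_intervals (hII _ _) (hII _ _),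
          intervalIntegral.integral_add_adjacent_intervals (hII _ _) (hII _ _)]
      have p1 : ∫ z in (-1:ℝ)..a, f z = ∫ z in (-1:ℝ)..a, (π - π * z^2) := by
        refine intervalIntegral.integral_congr fun z hz => ?_
        rw [uIcc_of_le (by linarith : (-1:ℝ) ≤ a)] at hz
        obtain ⟨hz1, hz2⟩ := hz
        have hzneg : z < 0 := lt_of_le_of_lt hz2 h2
        show max 0 (π * Jc a z) = π - π * z^2
        unfold Jc
        have hmin : (1 - z^2) ≤ z^2*(1-a^2)/a^2 := by
          rw [le_div_iff₀ ha2]; nlinarith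
        have hp : (0:ℝ) ≤ 1 + z := by linarith
        have hq : (0:ℝ) ≤ 1 - z := by linarith
        have hnn : (0:ℝ) ≤ π * (1 - z^2) := by nlinarith [pi_pos, mul_nonneg hp hq]
        rw [if_pos hzneg, if_pos h2, min_eq_left hmin, max_eq_right hnn]
        ring
      have p2 : ∫ z in a..(0:ℝ), f z
          = ∫ z in a..(0:ℝ), (π*(1-a^2)/a^2) * z^2 := by
        refine intervalIntegral.integral_congr fun z hz => ?_
        rw [uIcc_of_le (by linarith : a ≤ (0:ℝ))] at hz
        obtain ⟨hz1, hz2⟩ := hz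
        rcases hz2.lt_or_eq with hzlt | hzeq
        · show max 0 (π * Jc a z) = π*(1-a^2)/a^2 * z^2
          unfold Jc
          have hmin : z^2*(1-a^2)/a^2 ≤ 1 - z^2 := by
            rw [div_le_iff₀ ha2]; nlinarith
          have h1a : (0:ℝ) < 1 - a^2 := by nlinarith
          have hnn0 : (0:ℝ) ≤ z^2*(1-a^2)/a^2 := by positivity
          have hnn : (0:ℝ) ≤ π * (z^2*(1-a^2)/a^2) := by nlinarith [pi_pos]
          rw [if_pos hzlt, if_pos h2, min_eq_right hmin, max_eq_right hnn]
          ring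
        · subst hzeq
          show max 0 (π * Jc a 0) = π*(1-a^2)/a^2 * 0^2
          unfold Jc
          rw [if_neg (lt_irrefl 0), if_neg (not_lt.2 h2.le)]
          simp
      have p3 : ∫ z in (0:ℝ)..1, f z = 0 := by
        have : EqOn f (fun _ => (0:ℝ)) (uIcc (0:ℝ) 1) := by
          intro z hz
          rw [uIcc_of_le (by norm_num : (0:ℝ) ≤ 1)] at hz
          show max 0 (π * Jc a z) = 0
          unfold Jc
          rw [if_neg (not_lt.2 hz.1), if_neg (not_lt.2 h2.le)]
          simp
        rw [intervalIntegral.integral_congr this, intervalIntegral.integral_zero]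
      rw [hsplit, p1, p2, p3, max_eq_right h1.le, int_one_sub_sq, int_const_mul_sq]
      field_simp
      ring
    · -- 0 ≤ a < 1
      have p1 : ∫ z in (-1:ℝ)..(0:ℝ), f z = ∫ z in (-1:ℝ)..(0:ℝ), (π - π * z^2) := by
        refine intervalIntegral.integral_congr_ae ?_
        have h0 : ∀ᵐ z : ℝ, z ≠ (0:ℝ) := by
          rw [ae_iff]
          simp only [ne_eq, not_not, setOf_eq_eq_singleton]
          exact measure_singleton (0:ℝ)
        filter_upwards [h0] with z hz0 hmem
        rw [uIoc_of_le (by norm_num : (-1:ℝ) ≤ 0)] at hmem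
        obtain ⟨hz1, hz2⟩ := hmem
        have hzneg : z < 0 := lt_of_le_of_ne hz2 hz0
        show max 0 (π * Jc a z) = π - π * z^2
        unfold Jc
        have hp : (0:ℝ) ≤ 1 + z := by linarith
        have hq : (0:ℝ) ≤ 1 - z := by linarith
        have hnn : (0:ℝ) ≤ π * (1 - z^2) := by nlinarith [pi_pos, mul_nonneg hp hq]
        rw [if_pos hzneg, if_neg (not_lt.2 h2), max_eq_right hnn]
        ring
      rcases eq_or_lt_of_le h2 with h3 | h3
      · -- a = 0
        have hsplit : ∫ z in (-1:ℝ)..1, f z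
            = (∫ z in (-1:ℝ)..(0:ℝ), f z) + ∫ z in (0:ℝ)..1, f z := by
          rw [intervalIntegral.integral_add_adjacent_intervals (hII _ _) (hII _ _)]
        have p3 : ∫ z in (0:ℝ)..1, f z = 0 := by
          have : EqOn f (fun _ => (0:ℝ)) (uIcc (0:ℝ) 1) := by
            intro z hz
            rw [uIcc_of_le (by norm_num : (0:ℝ) ≤ 1)] at hz
            show max 0 (π * Jc a z) = 0
            unfold Jc
            rw [if_neg (not_lt.2 hz.1), if_neg (by rw [← h3]; exact lt_irrefl 0)]
            simp
          rw [intervalIntegral.integral_congr this, intervalIntegral.integral_zero]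
        rw [hsplit, p1, p3, int_one_sub_sq, ← h3, max_eq_right (by norm_num : (-1:ℝ) ≤ 0)]
        ring
      · -- 0 < a < 1
        have ha0 : a ≠ 0 := ne_of_gt h3
        have ha2 : (0:ℝ) < a^2 := lt_of_le_of_ne (sq_nonneg a) (Ne.symm (pow_ne_zero 2 ha0))
        have hsplit : ∫ z in (-1:ℝ)..1, f z
            = ((∫ z in (-1:ℝ)..(0:ℝ), f z) + ∫ z in (0:ℝ)..a, f z) + ∫ z in a..1, f z := by
          rw [intervalIntegral.integral_add_adjacent_intervals (hII _ _) (hII _ _),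
            intervalIntegral.integral_add_adjacent_intervals (hII _ _) (hII _ _)]
        have key : ∀ z : ℝ, (1 - z^2) - z^2*(1-a^2)/a^2 = (a^2 - z^2)/a^2 := by
          intro z; field_simp; ring
        have p2 : ∫ z in (0:ℝ)..a, f z = ∫ z in (0:ℝ)..a, (π - (π/a^2) * z^2) := by
          refine intervalIntegral.integral_congr fun z hz => ?_
          rw [uIcc_of_le h3.le] at hz
          obtain ⟨hz1, hz2⟩ := hz
          show max 0 (π * Jc a z) = π - (π/a^2) * z^2
          unfold Jc
          have hnum : (0:ℝ) ≤ a^2 - z^2 := by nlinarith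
          have hdiv : (0:ℝ) ≤ (a^2 - z^2)/a^2 := div_nonneg hnum ha2.le
          have hnn : (0:ℝ) ≤ π * ((a^2 - z^2)/a^2) := by nlinarith [pi_pos]
          rw [if_neg (not_lt.2 hz1), if_pos h3, key z, max_eq_right hnn]
          field_simp
        have p3 : ∫ z in a..(1:ℝ), f z = 0 := by
          have : EqOn f (fun _ => (0:ℝ)) (uIcc a 1) := by
            intro z hz
            rw [uIcc_of_le ha.le] at hz
            obtain ⟨hz1, hz2⟩ := hz
            show max 0 (π * Jc a z) = 0
            unfold Jc
            rw [if_neg (not_lt.2 (by linarith : (0:ℝ) ≤ z)), if_pos h3, key z]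
            refine max_eq_left ?_
            have hnum : (a^2 - z^2)/a^2 ≤ 0 :=
              div_nonpos_of_nonpos_of_nonneg (by nlinarith) ha2.le
            exact mul_nonpos_of_nonneg_of_nonpos pi_pos.le hnum
          rw [intervalIntegral.integral_congr this, intervalIntegral.integral_zero]
        have v2 : ∫ z in (0:ℝ)..a, (π - (π/a^2) * z^2) = π*a - (π/a^2)*(a^3)/3 := by
          rw [intervalIntegral.integral_sub intervalIntegrable_const
              ((intervalIntegral.intervalIntegrable_pow 2).const_mul _),
            intervalIntegral.integral_const_mul, integral_pow,
            intervalIntegral.integral_const, smul_eq_mul]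
          norm_num
          ring
        rw [hsplit, p1, p2, p3, int_one_sub_sq, v2, max_eq_right (by linarith : (-1:ℝ) ≤ a)]
        field_simp
        ring

private lemma norm3 (x : EuclideanSpace ℝ (Fin 3)) : ‖x‖ = Real.sqrt (∑ i, x i ^ 2) := by
  rw [EuclideanSpace.norm_eq]
  congr 1
  exact Finset.sum_congr rfl fun i _ => by rw [Real.norm_eq_abs, sq_abs]

private lemma coord_le_norm (x : EuclideanSpace ℝ (Fin 3)) : x 2 ≤ ‖x‖ := by
  rw [norm3]
  calc x 2 ≤ |x 2| := le_abs_self _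
    _ = Real.sqrt ((x 2) ^ 2) := (Real.sqrt_sq_eq_abs _).symm
    _ ≤ Real.sqrt (∑ i, x i ^ 2) := Real.sqrt_le_sqrt
        (Finset.single_le_sum (fun i _ => sq_nonneg (x i)) (Finset.mem_univ 2))

private lemma volU (a : ℝ) :
    volume {x : EuclideanSpace ℝ (Fin 3) | ‖x‖ ∈ Ioo 0 1 ∧ x 2 ≤ a * ‖x‖}
      = ENNReal.ofReal (2*π/3*(1 + max (-1) (min a 1))) := by
  rcases lt_or_ge a 1 with ha | ha
  · -- a < 1 : use the Fubini computation
    have hmin : min a 1 = a := min_eq_left ha.le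
    have hset : {x : EuclideanSpace ℝ (Fin 3) | ‖x‖ ∈ Ioo 0 1 ∧ x 2 ≤ a * ‖x‖}
        = (MeasurableEquiv.toLp 2 (Fin 3 → ℝ)).symm ⁻¹' {x : Fin 3 → ℝ |
            (Real.sqrt (∑ i, x i ^ 2) ∈ Ioo 0 1) ∧ x 2 ≤ a * Real.sqrt (∑ i, x i ^ 2)} := by
      ext x
      have hx : ∀ i, (MeasurableEquiv.toLp 2 (Fin 3 → ℝ)).symm x i = x i := fun _ => rfl
      simp only [mem_preimage, mem_setOf_eq, hx]
      rw [norm3 x]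
    have hWmeas : MeasurableSet {x : Fin 3 → ℝ |
        (Real.sqrt (∑ i, x i ^ 2) ∈ Ioo 0 1) ∧ x 2 ≤ a * Real.sqrt (∑ i, x i ^ 2)} := by
      have hf : Measurable fun x : Fin 3 → ℝ => Real.sqrt (∑ i, x i ^ 2) :=
        Real.continuous_sqrt.measurable.comp (by fun_prop)
      exact (hf measurableSet_Ioo).inter
        (measurableSet_le (measurable_pi_apply 2) (hf.const_mul a))
    rw [hset, (EuclideanSpace.volume_preserving_symm_measurableEquiv_toLp (Fin 3)).measure_preimage
        hWmeas.nullMeasurableSet, volW_eq_lintegral a ha, lint_J a ha, hmin]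
  · -- 1 ≤ a : full punctured ball
    have hset : {x : EuclideanSpace ℝ (Fin 3) | ‖x‖ ∈ Ioo 0 1 ∧ x 2 ≤ a * ‖x‖}
        = ball (0 : EuclideanSpace ℝ (Fin 3)) 1 \ {0} := by
      ext x
      simp only [mem_setOf_eq, mem_Ioo, mem_diff, mem_ball, dist_zero_right,
        mem_singleton_iff]
      constructor
      · rintro ⟨⟨h0, h1⟩, -⟩
        exact ⟨h1, fun h => by simp [h] at h0⟩
      · rintro ⟨h1, h0⟩
        have hn : 0 < ‖x‖ := norm_pos_iff.2 h0
        refine ⟨⟨hn, h1⟩, ?_⟩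
        calc x 2 ≤ ‖x‖ := coord_le_norm x
          _ = 1 * ‖x‖ := (one_mul _).symm
          _ ≤ a * ‖x‖ := mul_le_mul_of_nonneg_right ha (norm_nonneg _)
    rw [hset, measure_diff_null (measure_singleton _), EuclideanSpace.volume_ball]
    have hG : Real.Gamma ((Fintype.card (Fin 3) : ℝ)/2 + 1) = 3/4 * Real.sqrt π := by
      rw [show ((Fintype.card (Fin 3) : ℝ))/2 + 1 = 3/2 + 1 by norm_num,
        Real.Gamma_add_one (by norm_num : (3:ℝ)/2 ≠ 0),
        show (3:ℝ)/2 = 1/2 + 1 by norm_num,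
        Real.Gamma_add_one (by norm_num : (1:ℝ)/2 ≠ 0), Real.Gamma_one_half_eq]
      ring
    rw [hG]
    have hsp : Real.sqrt π ≠ 0 := (Real.sqrt_pos.2 pi_pos).ne'
    have hval : Real.sqrt π ^ Fintype.card (Fin 3) / (3/4 * Real.sqrt π) = 4*π/3 := by
      rw [show Fintype.card (Fin 3) = 3 by simp, pow_succ, Real.sq_sqrt pi_pos.le]
      field_simp
    rw [hval, ENNReal.ofReal_one, one_pow, one_mul,
      min_eq_right ha, max_eq_right (by norm_num : (-1:ℝ) ≤ 1)]
    congr 1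
    ring

private lemma hTmeas : Measurable (fun s : sphere (0:E3) 1 => (s : E3) 2) :=
  ((EuclideanSpace.proj (2 : Fin 3)).continuous.comp continuous_subtype_val).measurable

private lemma cap_meas (a : ℝ) :
    MeasurableSet {s : sphere (0:E3) 1 | (s : E3) 2 ≤ a} :=
  hTmeas measurableSet_Iic

private lemma smul_cap (a : ℝ) :
    (Ioo (0:ℝ) 1) • ((↑) '' {s : sphere (0:E3) 1 | (s : E3) 2 ≤ a})
      = {x : E3 | ‖x‖ ∈ Ioo 0 1 ∧ x 2 ≤ a * ‖x‖} := by
  ext x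
  rw [Set.mem_smul]
  constructor
  · rintro ⟨c, hc, y, hy, rfl⟩
    obtain ⟨s, hs, rfl⟩ := hy
    have hsn : ‖(s : E3)‖ = 1 := mem_sphere_zero_iff_norm.1 s.2
    obtain ⟨hc0, hc1⟩ := hc
    have hnorm : ‖c • (s : E3)‖ = c := by
      rw [norm_smul, hsn, mul_one, Real.norm_eq_abs, abs_of_pos hc0]
    refine ⟨by rw [hnorm]; exact ⟨hc0, hc1⟩, ?_⟩
    have hcoord : (c • (s : E3)) 2 = c * (s : E3) 2 := rfl
    rw [hcoord, hnorm, mul_comm a c]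
    exact mul_le_mul_of_nonneg_left hs hc0.le
  · rintro ⟨⟨h0, h1⟩, h2⟩
    have hx0 : x ≠ 0 := fun h => by simp [h] at h0
    have hinv : (0:ℝ) < ‖x‖⁻¹ := inv_pos.2 h0
    refine ⟨‖x‖, ⟨h0, h1⟩, ‖x‖⁻¹ • x, ⟨⟨‖x‖⁻¹ • x,
      mem_sphere_zero_iff_norm.2 (norm_smul_inv_norm hx0)⟩, ?_, rfl⟩, ?_⟩
    · show ((‖x‖⁻¹ • x : E3)) 2 ≤ a
      have hcoord : ((‖x‖⁻¹ • x : E3)) 2 = ‖x‖⁻¹ * x 2 := rfl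
      rw [hcoord]
      calc ‖x‖⁻¹ * x 2 ≤ ‖x‖⁻¹ * (a * ‖x‖) := mul_le_mul_of_nonneg_left h2 hinv.le
        _ = a * (‖x‖⁻¹ * ‖x‖) := by ring
        _ = a := by rw [inv_mul_cancel₀ h0.ne', mul_one]
    · show ‖x‖ • (‖x‖⁻¹ • x) = x
      rw [smul_smul, mul_inv_cancel₀ h0.ne', one_smul]

private lemma cap_vol (a : ℝ) :
    (volume : Measure E3).toSphere {s : sphere (0:E3) 1 | (s : E3) 2 ≤ a}
      = ENNReal.ofReal (2*π*(1 + max (-1) (min a 1))) := by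
  rw [Measure.toSphere_apply' _ (cap_meas a), smul_cap, volU]
  rw [finrank_euclideanSpace_fin]
  rw [show ((3:ℕ) : ℝ≥0∞) = ENNReal.ofReal 3 by simp,
    ← ENNReal.ofReal_mul (by norm_num)]
  congr 1
  ring

private lemma map_T :
    Measure.map (fun s : sphere (0:E3) 1 => (s : E3) 2)
        (volume : Measure E3).toSphere
      = ENNReal.ofReal (2*π) • ((volume : Measure ℝ).restrict (Ioc (-1:ℝ) 1)) := by
  haveI : IsFiniteMeasure (Measure.map (fun s : sphere (0:E3) 1 => (s : E3) 2)
      (volume : Measure E3).toSphere) :=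
    ⟨by rw [Measure.map_apply hTmeas MeasurableSet.univ]; exact measure_lt_top _ _⟩
  refine Measure.ext_of_Iic _ _ fun a => ?_
  rw [Measure.map_apply hTmeas measurableSet_Iic]
  have hpre : (fun s : sphere (0:E3) 1 => (s : E3) 2) ⁻¹' Iic a
      = {s : sphere (0:E3) 1 | (s : E3) 2 ≤ a} := rfl
  rw [hpre, cap_vol, Measure.smul_apply, Measure.restrict_apply measurableSet_Iic,
    smul_eq_mul, inter_comm, Set.Ioc_inter_Iic, Real.volume_Ioc]
  rcases le_total (min a 1) (-1) with h | h
  · rw [min_comm] at h ⊢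
    rw [max_eq_left h]
    rw [show (2*π*(1 + -1)) = 0 by ring, ENNReal.ofReal_zero,
      ENNReal.ofReal_eq_zero.2 (by linarith : min 1 a - -1 ≤ 0), mul_zero]
  · rw [min_comm] at h ⊢
    rw [max_eq_right h, ← ENNReal.ofReal_mul (by positivity : (0:ℝ) ≤ 2*π)]
    congr 1
    ring

private lemma hFmeas : Measurable (fun t : ℝ => (Real.sqrt (2 - 2*t))⁻¹) :=
  (Real.continuous_sqrt.measurable.comp (by fun_prop)).inv

private lemma int_F : ∫ t in (-1:ℝ)..1, (Real.sqrt (2 - 2*t))⁻¹ = 2 := by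
  have hderiv : ∀ x ∈ Ioo (-1:ℝ) 1,
      HasDerivWithinAt (fun t => -Real.sqrt (2 - 2*t))
        ((Real.sqrt (2 - 2*x))⁻¹) (Ioi x) x := by
    intro x hx
    have h2 : (0:ℝ) < 2 - 2*x := by nlinarith [hx.2]
    have hs : HasDerivAt (fun t : ℝ => 2 - 2*t) (-2) x := by
      simpa using ((hasDerivAt_id x).const_mul (2:ℝ)).const_sub 2
    have hcomp := (Real.hasDerivAt_sqrt h2.ne').comp x hs
    have hneg := hcomp.neg
    have hsq : Real.sqrt (2-2*x) ≠ 0 := (Real.sqrt_pos.2 h2).ne'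
    have heq : -(1 / (2 * Real.sqrt (2 - 2*x)) * -2) = (Real.sqrt (2 - 2*x))⁻¹ := by
      field_simp
    rw [heq] at hneg
    exact hneg.hasDerivWithinAt
  have hcont : ContinuousOn (fun t : ℝ => -Real.sqrt (2 - 2*t)) (Icc (-1:ℝ) 1) :=
    (Real.continuous_sqrt.comp (by continuity)).neg.continuousOn
  have hint : IntervalIntegrable (fun t : ℝ => (Real.sqrt (2 - 2*t))⁻¹) volume (-1) 1 := by
    have h1 : IntervalIntegrable (fun y : ℝ => y ^ (-(1/2) : ℝ)) volume 0 4 :=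
      intervalIntegral.intervalIntegrable_rpow' (by norm_num)
    have h2 := h1.comp_sub_left 2
    have h3 := (h2.comp_mul_left (c := 2)).symm
    norm_num at h3
    rw [intervalIntegrable_iff] at h3 ⊢
    refine h3.congr_fun ?_ measurableSet_uIoc
    intro t ht
    rw [uIoc_of_le (by norm_num : (-1:ℝ) ≤ 1), mem_Ioc] at ht
    have h2t : (0:ℝ) ≤ 2 - 2*t := by linarith [ht.2]
    show (2 - 2*t) ^ (-(1/2) : ℝ) = (Real.sqrt (2 - 2*t))⁻¹
    rw [Real.sqrt_eq_rpow, ← Real.rpow_neg h2t]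
  have := intervalIntegral.integral_eq_sub_of_hasDeriv_right_of_le
    (by norm_num : (-1:ℝ) ≤ 1) hcont hderiv hint
  rw [this]
  norm_num

private lemma key_norm (s : sphere (0 : E3) 1) :
    ‖(s : E3) - (WithLp.equiv 2 (Fin 3 → ℝ)).symm ![0, 0, 1]‖
      = Real.sqrt (2 - 2 * (s : E3) 2) := by
  set x : E3 := (s : E3) with hx
  have hx1 : ‖x‖ = 1 := mem_sphere_zero_iff_norm.1 s.2
  have hsum : x 0 ^ 2 + x 1 ^ 2 + x 2 ^ 2 = 1 := by
    have h := hx1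
    rw [EuclideanSpace.norm_eq] at h
    have h2 : (∑ i, ‖x i‖ ^ 2) = 1 := by
      have := Real.sqrt_eq_one.1 h
      exact this
    simpa [Fin.sum_univ_three, Real.norm_eq_abs, sq_abs] using h2
  rw [EuclideanSpace.norm_eq]
  have hco : ∀ i, ((x - (WithLp.equiv 2 (Fin 3 → ℝ)).symm ![0, 0, 1]) i)
      = x i - ![0, 0, 1] i := fun i => rfl
  simp only [hco, Real.norm_eq_abs, sq_abs, Fin.sum_univ_three]
  congr 1
  simp only [Matrix.cons_val_zero, Matrix.cons_val_one, Matrix.head_cons,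
    Matrix.cons_val_two, Matrix.tail_cons]
  linear_combination hsum

/-- The surface integral over the unit sphere S² in ℝ³ of 1/|s − k|,
where k = (0,0,1) is the north pole, equals 4π. -/
theorem sphere_integral_inv_dist_northPole :
    ∫ s : sphere (0 : EuclideanSpace ℝ (Fin 3)) 1,
        1 / ‖(s : EuclideanSpace ℝ (Fin 3)) -
              (WithLp.equiv 2 (Fin 3 → ℝ)).symm ![0, 0, 1]‖
      ∂((volume : Measure (EuclideanSpace ℝ (Fin 3))).toSphere)
      = 4 * Real.pi := by
  have step1 : ∫ s : sphere (0 : E3) 1,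
        1 / ‖(s : E3) - (WithLp.equiv 2 (Fin 3 → ℝ)).symm ![0, 0, 1]‖
      ∂((volume : Measure E3).toSphere)
      = ∫ s : sphere (0 : E3) 1, (Real.sqrt (2 - 2 * (s : E3) 2))⁻¹
          ∂((volume : Measure E3).toSphere) := by
    refine integral_congr_ae (Filter.Eventually.of_forall fun s => ?_)
    show 1 / ‖(s : E3) - (WithLp.equiv 2 (Fin 3 → ℝ)).symm ![0, 0, 1]‖
        = (Real.sqrt (2 - 2 * (s : E3) 2))⁻¹
    rw [key_norm s, one_div]
  rw [step1]
  have step2 : ∫ s : sphere (0 : E3) 1, (Real.sqrt (2 - 2 * (s : E3) 2))⁻¹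
          ∂((volume : Measure E3).toSphere)
      = ∫ t, (Real.sqrt (2 - 2 * t))⁻¹
          ∂(Measure.map (fun s : sphere (0:E3) 1 => (s : E3) 2)
              (volume : Measure E3).toSphere) := by
    rw [integral_map hTmeas.aemeasurable hFmeas.aestronglyMeasurable]
  rw [step2, map_T, integral_smul_measure,
    ENNReal.toReal_ofReal (by positivity : (0:ℝ) ≤ 2*π)]
  have step3 : ∫ t, (Real.sqrt (2 - 2 * t))⁻¹ ∂((volume : Measure ℝ).restrict (Ioc (-1:ℝ) 1))
      = 2 := by
    have : ∫ t in Ioc (-1:ℝ) 1, (Real.sqrt (2 - 2 * t))⁻¹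
        = ∫ t in (-1:ℝ)..1, (Real.sqrt (2 - 2*t))⁻¹ :=
      (intervalIntegral.integral_of_le (by norm_num : (-1:ℝ) ≤ 1)).symm
    rw [this, int_F]
  rw [step3, smul_eq_mul]
  ring

end SphereIntegralProof
end

section
/- Let e₁, e₂, n : ℝ² → ℝ³ be differentiable with (e₁(X), e₂(X), n(X)) an orthonormal triple for every X (eᵢ·eⱼ = δᵢⱼ, eᵢ·n = 0, |n| = 1). Then n · (∂₁n × ∂₂n) = ∂₁e₁ · ∂₂e₂ − ∂₁e₂ · ∂₂e₁ whenever additionally n = e₁ × e₂. -/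
open Matrix

/-!
By the Lagrange identity, `n · (∂₁n × ∂₂n) = (e₁ × e₂) · (∂₁n × ∂₂n)` is
`(e₁ · ∂₁n)(e₂ · ∂₂n) − (e₁ · ∂₂n)(e₂ · ∂₁n)`, and differentiating `eᵢ · n = 0` turns this into
`(∂₁e₁ · n)(∂₂e₂ · n) − (∂₂e₁ · n)(∂₁e₂ · n)`. On the other side, expanding `∂₁e₁ · ∂₂e₂` in the
orthonormal frame `(e₁, e₂, n)` leaves only the `n`-components, since `∂ⱼeᵢ ⊥ eᵢ` for unit `eᵢ`;
likewise for `∂₁e₂ · ∂₂e₁`.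
-/

theorem dotProduct_eq_sum_mul_of_orthonormal {R ι : Type*} [CommRing R] [Fintype ι]
    [DecidableEq ι] (v : Matrix ι ι R) (hv : ∀ i j, v i ⬝ᵥ v j = if i = j then 1 else 0)
    (p s : ι → R) :
    p ⬝ᵥ s = ∑ i, (p ⬝ᵥ v i) * (s ⬝ᵥ v i) := by
  have hrows : v * vᵀ = 1 := by
    ext i j
    simpa [mul_apply, one_apply, dotProduct] using hv i j
  have hcols : vᵀ * v = 1 := mul_eq_one_comm.mp hrows
  calc p ⬝ᵥ s = p ⬝ᵥ (vᵀ * v) *ᵥ s := by rw [hcols, one_mulVec]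
    _ = (v *ᵥ p) ⬝ᵥ (v *ᵥ s) := by
      rw [← mulVec_mulVec, dotProduct_mulVec, vecMul_transpose]
    _ = ∑ i, (p ⬝ᵥ v i) * (s ⬝ᵥ v i) := by
      simp only [dotProduct, mulVec, mul_comm]

theorem dotProduct_eq_of_orthonormal_three {R : Type*} [CommRing R] {a b c : Fin 3 → R}
    (haa : a ⬝ᵥ a = 1) (hbb : b ⬝ᵥ b = 1) (hcc : c ⬝ᵥ c = 1)
    (hab : a ⬝ᵥ b = 0) (hac : a ⬝ᵥ c = 0) (hbc : b ⬝ᵥ c = 0) (p s : Fin 3 → R) :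
    p ⬝ᵥ s = (p ⬝ᵥ a) * (s ⬝ᵥ a) + (p ⬝ᵥ b) * (s ⬝ᵥ b) + (p ⬝ᵥ c) * (s ⬝ᵥ c) := by
  have hv : ∀ i j, ![a, b, c] i ⬝ᵥ ![a, b, c] j = if i = j then 1 else 0 := by
    intro i j
    fin_cases i <;> fin_cases j <;> simp [dotProduct_comm, *]
  simpa [Fin.sum_univ_three, add_assoc] using dotProduct_eq_sum_mul_of_orthonormal _ hv p s

section Derivatives

variable {E ι : Type*} [NormedAddCommGroup E] [NormedSpace ℝ E] [Fintype ι]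
  {f g : E → ι → ℝ} {x : E}

theorem fderiv_dotProduct_apply (hf : DifferentiableAt ℝ f x) (hg : DifferentiableAt ℝ g x)
    (v : E) :
    fderiv ℝ (fun y => f y ⬝ᵥ g y) x v = fderiv ℝ f x v ⬝ᵥ g x + f x ⬝ᵥ fderiv ℝ g x v := by
  have hfi := differentiableAt_pi.1 hf
  have hgi := differentiableAt_pi.1 hg
  simp only [dotProduct]
  rw [fderiv_fun_sum fun i _ => (hfi i).fun_mul (hgi i), ← Finset.sum_add_distrib]
  simp only [_root_.sum_apply, fderiv_fun_mul (hfi _) (hgi _), fderiv_apply hf, fderiv_apply hg]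
  simp [add_comm, mul_comm]

theorem dotProduct_fderiv_eq_neg_of_dotProduct_const (hf : DifferentiableAt ℝ f x)
    (hg : DifferentiableAt ℝ g x) {c : ℝ} (h : ∀ y, f y ⬝ᵥ g y = c) (v : E) :
    f x ⬝ᵥ fderiv ℝ g x v = -(fderiv ℝ f x v ⬝ᵥ g x) := by
  have hconst := fderiv_dotProduct_apply hf hg v
  rw [funext h, fderiv_const_apply, _root_.zero_apply] at hconst
  linear_combination -hconst

theorem fderiv_dotProduct_self_eq_zero_of_dotProduct_self_const (hf : DifferentiableAt ℝ f x)
    {c : ℝ} (h : ∀ y, f y ⬝ᵥ f y = c) (v : E) :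
    fderiv ℝ f x v ⬝ᵥ f x = 0 := by
  have hskew := dotProduct_fderiv_eq_neg_of_dotProduct_const hf hf h v
  rw [dotProduct_comm] at hskew
  linarith

end Derivatives

/-- For a differentiable positively oriented orthonormal moving frame
(e₁, e₂, n) with n = e₁ × e₂, one has
n · (∂₁n × ∂₂n) = ∂₁e₁ · ∂₂e₂ − ∂₁e₂ · ∂₂e₁. -/
theorem triple_product_eq_frame_identity (e1 e2 n : ℝ × ℝ → Fin 3 → ℝ)
    (h1 : Differentiable ℝ e1) (h2 : Differentiable ℝ e2) (hn : Differentiable ℝ n)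
    (o11 : ∀ X, e1 X ⬝ᵥ e1 X = 1) (o22 : ∀ X, e2 X ⬝ᵥ e2 X = 1)
    (onn : ∀ X, n X ⬝ᵥ n X = 1)
    (o12 : ∀ X, e1 X ⬝ᵥ e2 X = 0) (o1n : ∀ X, e1 X ⬝ᵥ n X = 0)
    (o2n : ∀ X, e2 X ⬝ᵥ n X = 0)
    (hcross : ∀ X, n X = e1 X ⨯₃ e2 X) (X : ℝ × ℝ) :
    n X ⬝ᵥ (fderiv ℝ n X (1, 0)) ⨯₃ (fderiv ℝ n X (0, 1)) =
      (fderiv ℝ e1 X (1, 0)) ⬝ᵥ (fderiv ℝ e2 X (0, 1)) -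
        (fderiv ℝ e2 X (1, 0)) ⬝ᵥ (fderiv ℝ e1 X (0, 1)) := by
  set d₁n := fderiv ℝ n X (1, 0)
  set d₂n := fderiv ℝ n X (0, 1)
  set d₁e₁ := fderiv ℝ e1 X (1, 0)
  set d₂e₁ := fderiv ℝ e1 X (0, 1)
  set d₁e₂ := fderiv ℝ e2 X (1, 0)
  set d₂e₂ := fderiv ℝ e2 X (0, 1)
  have hlagrange : n X ⬝ᵥ d₁n ⨯₃ d₂n =
      (e1 X ⬝ᵥ d₁n) * (e2 X ⬝ᵥ d₂n) - (e1 X ⬝ᵥ d₂n) * (e2 X ⬝ᵥ d₁n) := by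
    rw [hcross X, cross_dot_cross]
  have hskew1 := dotProduct_fderiv_eq_neg_of_dotProduct_const (h1 X) (hn X) o1n
  have hskew2 := dotProduct_fderiv_eq_neg_of_dotProduct_const (h2 X) (hn X) o2n
  have hunit1 := fderiv_dotProduct_self_eq_zero_of_dotProduct_self_const (h1 X) o11
  have hunit2 := fderiv_dotProduct_self_eq_zero_of_dotProduct_self_const (h2 X) o22
  have hframe := dotProduct_eq_of_orthonormal_three (o11 X) (o22 X) (onn X) (o12 X) (o1n X) (o2n X)
  have h₁₂ : d₁e₁ ⬝ᵥ d₂e₂ = (d₁e₁ ⬝ᵥ n X) * (d₂e₂ ⬝ᵥ n X) := by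
    rw [hframe d₁e₁ d₂e₂, hunit1, hunit2]
    ring
  have h₂₁ : d₁e₂ ⬝ᵥ d₂e₁ = (d₁e₂ ⬝ᵥ n X) * (d₂e₁ ⬝ᵥ n X) := by
    rw [hframe d₁e₂ d₂e₁, hunit1, hunit2]
    ring
  rw [hlagrange, hskew1, hskew1, hskew2, hskew2, h₁₂, h₂₁]
  ring
end
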